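/- Let K be a measurable space, F a separable real Hilbert space, and f ↦ ν_f an energy-measure assignment on (F, K). Then the set F_dom := { f ∈ F : ν_f is a minimal energy-dominant measure } is dense in F. -/

import Mathlib

open MeasureTheory

/-- The mutual measure value `ν_{f,g}(B) := (ν_{f+g}(B) − ν_f(B) − ν_g(B))/2`. -/
noncomputable def mutualEM {F K : Type*} [MeasurableSpace K] [Add F]
    (em : F → Measure K) (f g : F) (B : Set K) : ℝ :=
  ((em (f + g) B).toReal - (em f B).toReal - (em g B).toReal) / 2

/-- An energy-measure assignment on `(F, K)`: each `f : F` is assigned a finite measure `ν_f`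
on `K` such that (a) for every measurable `B`, `(f, g) ↦ ν_{f,g}(B)` is a (symmetric) bilinear
form on `F`, and (b) `(√(ν_f B) − √(ν_g B))² ≤ ν_{f−g}(B) ≤ 2‖f − g‖²` for all measurable `B`.
(Symmetry of the mutual form is automatic from its definition.) -/
structure EnergyMeasureAssignment (F K : Type*) [MeasurableSpace K]
    [NormedAddCommGroup F] [NormedSpace ℝ F] where
  em : F → Measure K
  finite : ∀ f, IsFiniteMeasure (em f)
  add_left : ∀ (f₁ f₂ g : F) (B : Set K), MeasurableSet B →
    mutualEM em (f₁ + f₂) g B = mutualEM em f₁ g B + mutualEM em f₂ g B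
  smul_left : ∀ (c : ℝ) (f g : F) (B : Set K), MeasurableSet B →
    mutualEM em (c • f) g B = c * mutualEM em f g B
  sqrt_diff_le : ∀ (f g : F) (B : Set K), MeasurableSet B →
    (Real.sqrt (em f B).toReal - Real.sqrt (em g B).toReal) ^ 2 ≤ (em (f - g) B).toReal
  le_norm : ∀ (f g : F) (B : Set K), MeasurableSet B →
    (em (f - g) B).toReal ≤ 2 * ‖f - g‖ ^ 2

/-- `ν` is a minimal energy-dominant measure: it is σ-finite, dominates every energy measure,
and is absolutely continuous with respect to any other σ-finite measure that does so. -/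
def IsMinimalEnergyDominant {F K : Type*} [MeasurableSpace K]
    [NormedAddCommGroup F] [NormedSpace ℝ F]
    (E : EnergyMeasureAssignment F K) (ν : Measure K) : Prop :=
  SigmaFinite ν ∧ (∀ f, E.em f ≪ ν) ∧
    ∀ ν' : Measure K, SigmaFinite ν' → (∀ f, E.em f ≪ ν') → ν ≪ ν'

/-!
Fix a dense sequence `eₙ` in `F` and a finite measure `ν` with the same null sets as `∑ ν_{eₙ}`.
The Lipschitz bound `|√ν_f(B) - √ν_g(B)| ≤ √2 ‖f - g‖` gives `ν_f ≪ ν` for every `f`, so `ν_g` is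
minimal energy-dominant as soon as its density `r_g = dν_g/dν` is positive `ν`-a.e.

Polarisation makes `t ↦ r_{a + t b}` a quadratic polynomial a.e. This yields a pointwise
Cauchy–Schwarz inequality, hence subadditivity of `√r`, and shows that for almost every `t` the
density of `a + t b` is positive wherever that of `a` or of `b` is. So for each `n`, the `g` with
`r_g > 0` a.e. on `{r_{eₙ} > 0}` are dense. Asking instead for `r_g > θ > 0` off a set of measure
`< ε` turns this into an open condition (by subadditivity of `√r` and Chebyshev), and the Baire
category theorem produces a dense set of `g` with `r_g > 0` a.e.
-/

open Filter Topology

lemma mutualEM_comm {F K : Type*} [MeasurableSpace K] [AddCommMagma F] (em : F → Measure K)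
    (f g : F) (B : Set K) : mutualEM em f g B = mutualEM em g f B := by
  simp only [mutualEM, add_comm f g]
  ring

lemma toReal_add_apply_eq {F K : Type*} [MeasurableSpace K] [Add F] (em : F → Measure K)
    (f g : F) (B : Set K) :
    (em (f + g) B).toReal = (em f B).toReal + (em g B).toReal + 2 * mutualEM em f g B := by
  unfold mutualEM
  ring

lemma eq_zero_of_map_add_of_abs_le_mul_sq {ψ : ℝ → ℝ} (hadd : ∀ c d, ψ (c + d) = ψ c + ψ d)
    {C : ℝ} (hC : ∀ c, |ψ c| ≤ C * c ^ 2) (c : ℝ) : ψ c = 0 := by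
  let φ : ℝ →+ ℝ := AddMonoidHom.mk' ψ hadd
  have hle : ∀ n : ℕ, 0 < n → |ψ c| ≤ C * c ^ 2 / n := by
    intro n hn
    have hn' : (0 : ℝ) < n := Nat.cast_pos.mpr hn
    have hsplit : ψ c = n * ψ (c / n) := by
      simpa [φ, nsmul_eq_mul, mul_div_cancel₀ _ hn'.ne'] using map_nsmul φ n (c / n)
    rw [hsplit, abs_mul, Nat.abs_cast, le_div_iff₀ hn']
    calc n * |ψ (c / n)| * n ≤ n * (C * (c / n) ^ 2) * n := by gcongr; exact hC _
      _ = C * c ^ 2 := by field_simp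
  have : |ψ c| ≤ 0 :=
    ge_of_tendsto (tendsto_const_div_atTop_nhds_zero_nat _)
      ((eventually_gt_atTop 0).mono hle)
  exact abs_nonpos_iff.mp this

lemma Polynomial.finite_setOf_add_mul_add_mul_sq_eq_zero {R : Type*} [CommRing R] [IsDomain R]
    {a b c : R} (h : a ≠ 0 ∨ c ≠ 0) : {t : R | a + b * t + c * t ^ 2 = 0}.Finite := by
  set P : Polynomial R := C a + C b * X + C c * X ^ 2
  have hP : P ≠ 0 := by
    rintro hP
    rcases h with h | h
    · exact h (by simpa [P] using congrArg (coeff · 0) hP)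
    · exact h (by simpa [P, coeff_X, coeff_C] using congrArg (coeff · 2) hP)
  refine (finite_setOfPred_isRoot hP).subset fun t ht => ?_
  simpa [P] using ht

namespace EnergyMeasureAssignment

variable {F K : Type*} [MeasurableSpace K] [NormedAddCommGroup F] [NormedSpace ℝ F]
  (E : EnergyMeasureAssignment F K)

instance isFiniteMeasure_em (f : F) : IsFiniteMeasure (E.em f) := E.finite f

lemma mutualEM_smul_right (c : ℝ) (f g : F) {B : Set K} (hB : MeasurableSet B) :
    mutualEM E.em f (c • g) B = c * mutualEM E.em f g B := by
  rw [mutualEM_comm, E.smul_left c g f B hB, mutualEM_comm]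

lemma toReal_apply_le (f : F) {B : Set K} (hB : MeasurableSet B) :
    (E.em f B).toReal ≤ 2 * ‖f‖ ^ 2 := by
  simpa using E.le_norm f 0 B hB

/-- Bilinearity alone only makes `c ↦ ν_{c f}(B) - c² ν_{f,f}(B)` additive; the bound
`0 ≤ ν_{c f}(B) ≤ 2 c² ‖f‖²` forces it to vanish. -/
lemma toReal_smul_apply (c : ℝ) (f : F) {B : Set K} (hB : MeasurableSet B) :
    (E.em (c • f) B).toReal = c ^ 2 * (E.em f B).toReal := by
  set b := mutualEM E.em f f B
  set ψ : ℝ → ℝ := fun c => (E.em (c • f) B).toReal - c ^ 2 * b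
  have hadd : ∀ c d, ψ (c + d) = ψ c + ψ d := by
    intro c d
    simp only [ψ, add_smul, toReal_add_apply_eq, E.smul_left c f _ B hB,
      E.mutualEM_smul_right d f f hB]
    ring
  have hbound : ∀ c, |ψ c| ≤ (2 * ‖f‖ ^ 2 + |b|) * c ^ 2 := by
    intro c
    have hle := E.toReal_apply_le (c • f) hB
    rw [norm_smul, mul_pow, Real.norm_eq_abs, sq_abs] at hle
    rw [abs_le]
    constructor <;> nlinarith [ENNReal.toReal_nonneg (a := E.em (c • f) B), sq_nonneg c,
      neg_abs_le b, le_abs_self b]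
  have hquad : ∀ c, (E.em (c • f) B).toReal = c ^ 2 * b := fun c =>
    sub_eq_zero.mp (eq_zero_of_map_add_of_abs_le_mul_sq hadd hbound c)
  have hone := hquad 1
  rw [one_smul, one_pow, one_mul] at hone
  rw [hquad, hone]

lemma toReal_add_smul_apply (a b : F) (t : ℝ) {B : Set K} (hB : MeasurableSet B) :
    (E.em (a + t • b) B).toReal =
      (E.em a B).toReal + 2 * t * mutualEM E.em a b B + t ^ 2 * (E.em b B).toReal := by
  rw [toReal_add_apply_eq, E.mutualEM_smul_right t a b hB, E.toReal_smul_apply t b hB]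
  ring

lemma lipschitzWith_sqrt_toReal_apply {B : Set K} (hB : MeasurableSet B) :
    LipschitzWith (Real.toNNReal √2) fun f => √(E.em f B).toReal := by
  refine LipschitzWith.of_dist_le_mul fun f g => ?_
  rw [Real.dist_eq, dist_eq_norm, Real.coe_toNNReal _ (Real.sqrt_nonneg 2),
    ← Real.sqrt_sq_eq_abs, ← Real.sqrt_sq (norm_nonneg (f - g)), ← Real.sqrt_mul zero_le_two]
  exact Real.sqrt_le_sqrt ((E.sqrt_diff_le f g B hB).trans (E.le_norm f g B hB))

lemma isClosed_setOf_apply_eq_zero {B : Set K} (hB : MeasurableSet B) :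
    IsClosed {f | E.em f B = 0} := by
  have : {f | E.em f B = 0} = (fun f => √(E.em f B).toReal) ⁻¹' {0} := by
    ext f
    simp [ENNReal.toReal_eq_zero_iff, measure_ne_top]
  rw [this]
  exact isClosed_singleton.preimage (E.lipschitzWith_sqrt_toReal_apply hB).continuous

lemma absolutelyContinuous_sum {ι : Type*} {e : ι → F} (he : DenseRange e) (f : F) :
    E.em f ≪ Measure.sum fun n => E.em (e n) := by
  refine Measure.AbsolutelyContinuous.mk fun B hB hzero => ?_
  rw [Measure.sum_apply _ hB, ENNReal.tsum_eq_zero] at hzero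
  exact he.induction_on f (E.isClosed_setOf_apply_eq_zero hB) hzero

noncomputable def density (ν : Measure K) (g : F) (x : K) : ℝ := ((E.em g).rnDeriv ν x).toReal

noncomputable def mutualDensity (ν : Measure K) (f g : F) (x : K) : ℝ :=
  (E.density ν (f + g) x - E.density ν f x - E.density ν g x) / 2

def densityBoundedBelowOn (ν : Measure K) (A : Set K) (ε : ℝ) : Set F :=
  {g | ∃ θ > 0, ν.real (A ∩ {x | E.density ν g x ≤ θ}) < ε}

section Density

variable {ν : Measure K}

lemma density_nonneg (g : F) (x : K) : 0 ≤ E.density ν g x := ENNReal.toReal_nonneg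

@[fun_prop]
lemma measurable_density (g : F) : Measurable (E.density ν g) :=
  (Measure.measurable_rnDeriv _ _).ennreal_toReal

lemma integrable_density (g : F) : Integrable (E.density ν g) ν :=
  Measure.integrable_toReal_rnDeriv

@[fun_prop]
lemma measurable_mutualDensity (f g : F) : Measurable (E.mutualDensity ν f g) := by
  unfold mutualDensity
  fun_prop

lemma integrable_mutualDensity (f g : F) : Integrable (E.mutualDensity ν f g) ν :=
  (((E.integrable_density _).sub (E.integrable_density f)).sub
    (E.integrable_density g)).div_const 2

lemma measurableSet_setOf_pos_density (g : F) : MeasurableSet {x | 0 < E.density ν g x} :=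
  measurableSet_lt measurable_const (E.measurable_density g)

lemma isMinimalEnergyDominant_em_of_absolutelyContinuous (hν : ∀ f, E.em f ≪ ν) {g : F}
    (h : ν ≪ E.em g) : IsMinimalEnergyDominant E (E.em g) :=
  ⟨inferInstance, fun f => (hν f).trans h, fun _ _ h' => h' g⟩

section SigmaFinite

variable [SigmaFinite ν]

lemma setIntegral_density {g : F} (hg : E.em g ≪ ν) (B : Set K) :
    ∫ x in B, E.density ν g x ∂ν = (E.em g B).toReal :=
  Measure.setIntegral_toReal_rnDeriv hg B

lemma setIntegral_mutualDensity (hν : ∀ g, E.em g ≪ ν) (f g : F) (B : Set K) :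
    ∫ x in B, E.mutualDensity ν f g x ∂ν = mutualEM E.em f g B := by
  have hi := fun g => (E.integrable_density (ν := ν) g).integrableOn (s := B)
  have hsub : IntegrableOn (fun x => E.density ν (f + g) x - E.density ν f x) B ν :=
    (hi _).sub (hi _)
  simp only [mutualDensity]
  rw [integral_div, integral_sub hsub (hi _), integral_sub (hi _) (hi _),
    E.setIntegral_density (hν _), E.setIntegral_density (hν _), E.setIntegral_density (hν _)]
  rfl

lemma density_add_smul_ae (hν : ∀ g, E.em g ≪ ν) (a b : F) (t : ℝ) :
    E.density ν (a + t • b) =ᵐ[ν] fun x =>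
      E.density ν a x + 2 * t * E.mutualDensity ν a b x + t ^ 2 * E.density ν b x := by
  have hia := E.integrable_density (ν := ν) a
  have hib := E.integrable_density (ν := ν) b
  have hiab : Integrable (fun x => 2 * t * E.mutualDensity ν a b x) ν :=
    (E.integrable_mutualDensity a b).const_mul _
  have hib' : Integrable (fun x => t ^ 2 * E.density ν b x) ν := hib.const_mul _
  have hsum : Integrable (fun x => E.density ν a x + 2 * t * E.mutualDensity ν a b x) ν :=
    hia.add hiab
  refine ae_eq_of_forall_setIntegral_eq_of_sigmaFinite
    (fun s _ _ => (E.integrable_density _).integrableOn)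
    (fun s _ _ => (hsum.add hib').integrableOn) fun s hs _ => ?_
  rw [integral_add hsum.integrableOn hib'.integrableOn,
    integral_add hia.integrableOn hiab.integrableOn, integral_const_mul,
    integral_const_mul, E.setIntegral_density (hν _), E.setIntegral_density (hν _),
    E.setIntegral_density (hν _), E.setIntegral_mutualDensity hν,
    E.toReal_add_smul_apply a b t hs]

lemma mutualDensity_sq_le_ae (hν : ∀ g, E.em g ≪ ν) (a b : F) :
    ∀ᵐ x ∂ν, E.mutualDensity ν a b x ^ 2 ≤ E.density ν a x * E.density ν b x := by
  have hrat : ∀ᵐ x ∂ν, ∀ q : ℚ,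
      0 ≤ E.density ν a x + 2 * q * E.mutualDensity ν a b x + q ^ 2 * E.density ν b x := by
    rw [ae_all_iff]
    intro q
    filter_upwards [E.density_add_smul_ae hν a b q] with x hx
    exact hx ▸ E.density_nonneg _ x
  filter_upwards [hrat] with x hx
  have hreal : ∀ t : ℝ,
      0 ≤ E.density ν b x * (t * t) + 2 * E.mutualDensity ν a b x * t + E.density ν a x := by
    intro t
    refine Rat.denseRange_cast.induction_on t (isClosed_le continuous_const (by fun_prop))
      fun q => ?_
    linarith [hx q]
  have := discrim_le_zero hreal
  unfold discrim at this
  linarith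

lemma sqrt_density_add_le_ae (hν : ∀ g, E.em g ≪ ν) (a b : F) :
    ∀ᵐ x ∂ν, √(E.density ν (a + b) x) ≤ √(E.density ν a x) + √(E.density ν b x) := by
  filter_upwards [E.density_add_smul_ae hν a b 1, E.mutualDensity_sq_le_ae hν a b]
    with x hx hcs
  rw [one_smul] at hx
  have hσ : E.mutualDensity ν a b x ≤ √(E.density ν a x) * √(E.density ν b x) := by
    rw [← Real.sqrt_mul (E.density_nonneg a x)]
    exact Real.le_sqrt_of_sq_le hcs
  rw [Real.sqrt_le_left (by positivity), hx, add_sq, Real.sq_sqrt (E.density_nonneg a x),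
    Real.sq_sqrt (E.density_nonneg b x)]
  linarith

/-- For fixed `x`, the density of `a + t • b` at `x` is a quadratic polynomial in `t`, nonzero
when `a` or `b` has positive density at `x`; its finitely many roots are Lebesgue-null, and
Fubini exchanges the two quantifiers. -/
lemma ae_ae_density_add_smul_pos (hν : ∀ g, E.em g ≪ ν) (a b : F) :
    ∀ᵐ t ∂(volume : Measure ℝ), ∀ᵐ x ∂ν,
      0 < E.density ν a x ∨ 0 < E.density ν b x → 0 < E.density ν (a + t • b) x := by
  set p : K → ℝ → Prop := fun x t => 0 < E.density ν a x ∨ 0 < E.density ν b x →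
    E.density ν a x + 2 * E.mutualDensity ν a b x * t + E.density ν b x * t ^ 2 ≠ 0
  have hmeas : MeasurableSet {z : K × ℝ | p z.1 z.2} := by
    have hpos : ∀ g, Measurable fun z : K × ℝ => 0 < E.density ν g z.1 := fun g =>
      measurableSet_setOfPred.mp (measurableSet_lt measurable_const (by fun_prop))
    have hroot : Measurable fun z : K × ℝ =>
        E.density ν a z.1 + 2 * E.mutualDensity ν a b z.1 * z.2 + E.density ν b z.1 * z.2 ^ 2 = 0 :=
      measurableSet_setOfPred.mp (measurableSet_eq_fun (by fun_prop) measurable_const)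
    exact measurableSet_setOfPred.mpr (((hpos a).or (hpos b)).imp hroot.not)
  have hsection : ∀ x, ∀ᵐ t ∂(volume : Measure ℝ), p x t := by
    intro x
    by_cases hx : 0 < E.density ν a x ∨ 0 < E.density ν b x
    · have hfin := Polynomial.finite_setOf_add_mul_add_mul_sq_eq_zero
        (b := 2 * E.mutualDensity ν a b x) (hx.imp (fun h => h.ne') fun h => h.ne')
      refine measure_mono_null (fun t ht => ?_) (hfin.measure_zero volume)
      simp only [p, Set.mem_ofPred_eq] at ht ⊢
      by_contra hne
      exact ht fun _ => hne
    · exact ae_of_all _ fun t h => absurd h hx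
  filter_upwards [(Measure.ae_ae_comm (μ := ν) (ν := volume) hmeas).mp (ae_of_all _ hsection)]
    with t ht
  filter_upwards [ht, E.density_add_smul_ae hν a b t] with x hx hxt hpos
  refine (E.density_nonneg _ x).lt_of_ne fun hzero => hx hpos ?_
  rw [hxt] at hzero
  linarith

lemma dense_setOf_ae_density_pos_imp (hν : ∀ g, E.em g ≪ ν) (b : F) :
    Dense {g | ∀ᵐ x ∂ν, 0 < E.density ν b x → 0 < E.density ν g x} := by
  rw [Metric.dense_iff]
  intro f δ hδ
  set c := δ / (‖b‖ + 1)
  have hc : 0 < c := by positivity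
  obtain ⟨t, ht, hgood⟩ := Measure.exists_mem_of_measure_ne_zero_of_ae
    (by simpa using hc : volume (Set.Ioo 0 c) ≠ 0)
    (ae_restrict_of_ae (E.ae_ae_density_add_smul_pos hν f b))
  refine ⟨f + t • b, ?_, ?_⟩
  · rw [Metric.mem_ball, dist_eq_norm, add_sub_cancel_left, norm_smul,
      Real.norm_of_nonneg ht.1.le]
    calc t * ‖b‖ ≤ c * ‖b‖ := by gcongr; exact ht.2.le
      _ < c * (‖b‖ + 1) := by gcongr; linarith
      _ = δ := div_mul_cancel₀ δ (by positivity)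
  · filter_upwards [hgood] with x hx hb using hx (Or.inr hb)

lemma absolutelyContinuous_of_ae_density_pos {g : F} (hg : E.em g ≪ ν)
    (h : ∀ᵐ x ∂ν, 0 < E.density ν g x) : ν ≪ E.em g := by
  conv_rhs => rw [← Measure.withDensity_rnDeriv_eq _ _ hg]
  refine withDensity_absolutelyContinuous' (Measure.measurable_rnDeriv _ _).aemeasurable ?_
  filter_upwards [h] with x hx h0
  simp [density, h0] at hx

lemma ae_exists_density_pos {ι : Type*} [Countable ι] (e : ι → F)
    (hν : ν ≪ Measure.sum fun n => E.em (e n)) (he : ∀ n, E.em (e n) ≪ ν) :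
    ∀ᵐ x ∂ν, ∃ n, 0 < E.density ν (e n) x := by
  refine hν.ae_le (Measure.ae_sum_iff.mpr fun n => ?_)
  filter_upwards [Measure.rnDeriv_pos (he n),
    (he n).ae_le (Measure.rnDeriv_lt_top (E.em (e n)) ν)] with x hpos hfin
  exact ⟨n, ENNReal.toReal_pos hpos.ne' hfin.ne⟩

lemma measureReal_setOf_le_density_le {w : F} (hw : E.em w ≪ ν) {c : ℝ} (hc : 0 < c) :
    ν.real {x | c ≤ E.density ν w x} ≤ 2 * ‖w‖ ^ 2 / c := by
  rw [le_div_iff₀ hc, mul_comm]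
  calc c * ν.real {x | c ≤ E.density ν w x} ≤ ∫ x, E.density ν w x ∂ν :=
        mul_meas_ge_le_integral_of_nonneg (ae_of_all _ (E.density_nonneg w))
          (E.integrable_density w) c
    _ = (E.em w Set.univ).toReal := by rw [← setIntegral_univ, E.setIntegral_density hw]
    _ ≤ 2 * ‖w‖ ^ 2 := E.toReal_apply_le w MeasurableSet.univ

lemma tendsto_measureReal_setOf_le_density (hν : ∀ g, E.em g ≪ ν) {c : ℝ} (hc : 0 < c) :
    Tendsto (fun w => ν.real {x | c ≤ E.density ν w x}) (𝓝 0) (𝓝 0) := by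
  have hlim : Tendsto (fun w : F => 2 * ‖w‖ ^ 2 / c) (𝓝 0) (𝓝 0) := by
    simpa using (((continuous_norm.pow 2).const_mul 2).div_const c).tendsto (0 : F)
  exact tendsto_of_tendsto_of_tendsto_of_le_of_le tendsto_const_nhds hlim
    (fun _ => measureReal_nonneg) fun w => E.measureReal_setOf_le_density_le (hν w) hc

end SigmaFinite

section Finite

variable [IsFiniteMeasure ν]

lemma isOpen_densityBoundedBelowOn (hν : ∀ g, E.em g ≪ ν) (A : Set K) (ε : ℝ) :
    IsOpen (E.densityBoundedBelowOn ν A ε) := by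
  rw [isOpen_iff_mem_nhds]
  rintro g ⟨θ, hθ, hlt⟩
  have hsmall : ∀ᶠ g' in 𝓝 g, ν.real (A ∩ {x | E.density ν g x ≤ θ}) +
      ν.real {x | θ / 4 ≤ E.density ν (g - g') x} < ε := by
    have hsub : Tendsto (fun g' => g - g') (𝓝 g) (𝓝 0) :=
      (continuous_const.sub continuous_id).tendsto' g 0 (sub_self g)
    refine (((E.tendsto_measureReal_setOf_le_density hν (by positivity)).comp hsub).const_add
      _).eventually (gt_mem_nhds ?_)
    simpa using hlt
  filter_upwards [hsmall] with g' hg'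
  refine ⟨θ / 4, by positivity, lt_of_le_of_lt ?_ hg'⟩
  -- `√·` of the densities is subadditive, so a small density of `g'` where that of `g`
  -- exceeds `θ` forces a density `≥ θ / 4` of `g - g'`.
  have hincl : (A ∩ {x | E.density ν g' x ≤ θ / 4} : Set K) ≤ᵐ[ν]
      ((A ∩ {x | E.density ν g x ≤ θ}) ∪ {x | θ / 4 ≤ E.density ν (g - g') x} : Set K) := by
    filter_upwards [E.sqrt_density_add_le_ae hν g' (g - g')] with x hx
    rintro ⟨hA, hle⟩
    rw [add_sub_cancel] at hx
    by_cases hgθ : E.density ν g x ≤ θ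
    · exact Or.inl ⟨hA, hgθ⟩
    refine Or.inr (show θ / 4 ≤ E.density ν (g - g') x from ?_)
    rw [Set.mem_ofPred_eq] at hle
    have hsq := pow_le_pow_left₀ (Real.sqrt_nonneg _) hx 2
    have h₁ := Real.sq_sqrt (E.density_nonneg (ν := ν) g x)
    have h₂ := Real.sq_sqrt (E.density_nonneg (ν := ν) g' x)
    have h₃ := Real.sq_sqrt (E.density_nonneg (ν := ν) (g - g') x)
    nlinarith [sq_nonneg (√(E.density ν g' x) - √(E.density ν (g - g') x))]
  exact (ENNReal.toReal_mono (measure_ne_top _ _) (measure_mono_ae hincl)).trans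
    (measureReal_union_le _ _)

lemma mem_densityBoundedBelowOn {A : Set K} (hA : MeasurableSet A) {g : F}
    (h : ∀ᵐ x ∂ν, x ∈ A → 0 < E.density ν g x) {ε : ℝ} (hε : 0 < ε) :
    g ∈ E.densityBoundedBelowOn ν A ε := by
  have hlim := tendsto_measure_biInter_gt (μ := ν) (a := 0)
    (s := fun θ => A ∩ {x | E.density ν g x ≤ θ})
    (fun θ _ => (hA.inter (measurableSet_le (E.measurable_density g)
      measurable_const)).nullMeasurableSet)
    (fun _ _ _ hij => Set.inter_subset_inter_right _ fun _ hx => le_trans hx hij)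
    ⟨1, one_pos, measure_ne_top _ _⟩
  have hnull : ν (⋂ θ > 0, A ∩ {x | E.density ν g x ≤ θ}) = 0 := by
    refine measure_mono_null (fun x hx => ?_) (ae_iff.mp h)
    intro hpos
    have hx' := Set.mem_iInter₂.mp hx _ (half_pos (hpos (Set.mem_iInter₂.mp hx 1 one_pos).1))
    exact (half_lt_self (hpos hx'.1)).not_ge hx'.2
  rw [hnull] at hlim
  obtain ⟨θ, hsmall, hθ⟩ :=
    ((hlim.eventually (gt_mem_nhds (ENNReal.ofReal_pos.mpr hε))).and self_mem_nhdsWithin).exists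
  exact ⟨θ, hθ, ENNReal.toReal_lt_of_lt_ofReal hsmall⟩

lemma ae_density_pos_of_forall_mem {A : Set K} {g : F}
    (h : ∀ m : ℕ, g ∈ E.densityBoundedBelowOn ν A (1 / (m + 1))) :
    ∀ᵐ x ∂ν, x ∈ A → 0 < E.density ν g x := by
  have hbound : ∀ m : ℕ, ν.real (A ∩ {x | E.density ν g x ≤ 0}) ≤ 1 / (m + 1) := by
    intro m
    obtain ⟨θ, hθ, hlt⟩ := h m
    refine (measureReal_mono (Set.inter_subset_inter_right _ fun x hx => ?_)).trans hlt.le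
    exact le_trans hx hθ.le
  have hzero : ν.real (A ∩ {x | E.density ν g x ≤ 0}) = 0 :=
    le_antisymm (ge_of_tendsto' tendsto_one_div_add_atTop_nhds_zero_nat hbound)
      measureReal_nonneg
  rw [measureReal_eq_zero_iff] at hzero
  refine measure_mono_null (fun x hx => ?_) hzero
  simpa [Classical.not_imp] using hx

end Finite

end Density

end EnergyMeasureAssignment

/-- Proposition 2.6 of the paper: for an energy-measure assignment on a separable real Hilbert
space `F`, the set `F_dom` of `f` whose energy measure is a minimal energy-dominant measure
is dense in `F`. -/
theorem stmt10 {F K : Type*} [MeasurableSpace K] [NormedAddCommGroup F]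
    [InnerProductSpace ℝ F] [CompleteSpace F] [TopologicalSpace.SeparableSpace F]
    (E : EnergyMeasureAssignment F K) :
    Dense {f : F | IsMinimalEnergyDominant E (E.em f)} := by
  obtain ⟨e, he⟩ := TopologicalSpace.exists_dense_seq F
  set μ := Measure.sum fun n => E.em (e n)
  set ν := μ.toFinite
  have hν : ∀ f, E.em f ≪ ν := fun f =>
    (E.absolutelyContinuous_sum he f).trans (absolutelyContinuous_toFinite μ)
  set U : ℕ × ℕ → Set F := fun p =>
    E.densityBoundedBelowOn ν {x | 0 < E.density ν (e p.1) x} (1 / (p.2 + 1))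
  have hU : ∀ p, Dense (U p) := fun p =>
    (E.dense_setOf_ae_density_pos_imp hν (e p.1)).mono fun g hg =>
      E.mem_densityBoundedBelowOn (E.measurableSet_setOf_pos_density _) hg (by positivity)
  refine (dense_iInter_of_isOpen (fun p => E.isOpen_densityBoundedBelowOn hν _ _) hU).mono
    fun g hg => ?_
  have hpos : ∀ᵐ x ∂ν, 0 < E.density ν g x := by
    have hcover : ∀ n, ∀ᵐ x ∂ν, 0 < E.density ν (e n) x → 0 < E.density ν g x := fun n =>
      E.ae_density_pos_of_forall_mem fun m => Set.mem_iInter.mp hg (n, m)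
    filter_upwards [ae_all_iff.mpr hcover,
      E.ae_exists_density_pos e (toFinite_absolutelyContinuous μ) fun n => hν (e n)]
      with x hx hex
    obtain ⟨n, hn⟩ := hex
    exact hx n hn
  exact E.isMinimalEnergyDominant_em_of_absolutelyContinuous hν
    (E.absolutelyContinuous_of_ae_density_pos (hν g) hpos)
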